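/- arXiv:2405.15547 — 2 statements merged into one kernel-verified Lean document; each statement's English description precedes it below -/
import Mathlib

section
/- Let G be a simple graph on n vertices and ∅ ≠ S ⊊ V(G). If E(G_S) < E(G), then E(G_{V∖S}) > E(G); and if E(G_S) = E(G), then E(G_{V∖S}) ≥ E(G). -/
/-!
Put `c = |S|/n`. Then `(A + D_S - c I) + (A + D_{V∖S} - (1 - c) I) = 2A`, and the self-loop
energies are the trace norms of the two summands. For a symmetric `M`, `∑ |λᵢ(M) - c|` bounds
`tr((M - c I) X)` for every `X = W diag(s) Wᵀ` with `W` orthogonal and `|sⱼ| ≤ 1`, since the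
diagonal of such an `X` in the eigenbasis of `M` lies in `[-1, 1]`; taking for `X` the sign
matrix of `A` turns `tr(2A X)` into `2 E(G)`. Hence `2 E(G) ≤ E(G_S) + E(G_{V∖S})`.
-/

set_option linter.unusedSectionVars false

open Matrix Finset

/-- Diagonal 0/1 indicator matrix of the loop set `S`. -/
def loopDiag {V : Type} [Fintype V] [DecidableEq V] (S : Finset V) : Matrix V V ℝ :=
  Matrix.diagonal (fun v => if v ∈ S then (1 : ℝ) else 0)

lemma adjMatrix_isHermitian {V : Type} [Fintype V] [DecidableEq V]
    (G : SimpleGraph V) [DecidableRel G.Adj] :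
    (SimpleGraph.adjMatrix ℝ G).IsHermitian := by
  rw [Matrix.IsHermitian, conjTranspose_eq_transpose_of_trivial]
  exact G.isSymm_adjMatrix

lemma selfLoop_isHermitian {V : Type} [Fintype V] [DecidableEq V]
    (G : SimpleGraph V) [DecidableRel G.Adj] (S : Finset V) :
    (SimpleGraph.adjMatrix ℝ G + loopDiag S).IsHermitian :=
  (adjMatrix_isHermitian G).add (Matrix.isHermitian_diagonal _)

/-- `∑ i, |λᵢ(M) - c|`, the eigenvalue sum of absolute deviations from `c`. -/
noncomputable def energyOf {V : Type} [Fintype V] [DecidableEq V]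
    (M : Matrix V V ℝ) (hM : M.IsHermitian) (c : ℝ) : ℝ :=
  ∑ i, |hM.eigenvalues i - c|

/-- The energy of a simple graph: sum of absolute values of adjacency eigenvalues. -/
noncomputable def graphEnergy {V : Type} [Fintype V] [DecidableEq V]
    (G : SimpleGraph V) [DecidableRel G.Adj] : ℝ :=
  energyOf _ (adjMatrix_isHermitian G) 0

/-- The energy of the self-loop graph `G_S`: `∑ i, |λᵢ(A(G)+D_S) - |S|/n|`. -/
noncomputable def selfLoopEnergy {V : Type} [Fintype V] [DecidableEq V]
    (G : SimpleGraph V) [DecidableRel G.Adj] (S : Finset V) : ℝ :=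
  energyOf _ (selfLoop_isHermitian G S) ((S.card : ℝ) / (Fintype.card V))

lemma SignType.abs_coe_le_one {α : Type*} [Ring α] [LinearOrder α] [IsStrictOrderedRing α]
    (s : SignType) : |(s : α)| ≤ 1 := by
  cases s <;> simp

namespace Matrix

variable {n : Type} [Fintype n] [DecidableEq n]

lemma sum_sq_row_of_mem_unitaryGroup {W : Matrix n n ℝ} (hW : W ∈ unitaryGroup n ℝ) (i : n) :
    ∑ j, W i j ^ 2 = 1 := by
  simpa [mul_apply, sq] using congrFun (congrFun (mem_unitaryGroup_iff.mp hW) i) i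

lemma abs_conj_diagonal_apply_self_le_one {W : Matrix n n ℝ} (hW : W ∈ unitaryGroup n ℝ)
    {s : n → ℝ} (hs : ∀ j, |s j| ≤ 1) (i : n) : |(W * diagonal s * star W) i i| ≤ 1 := by
  have hentry : (W * diagonal s * star W) i i = ∑ j, s j * W i j ^ 2 := by
    rw [mul_apply]
    simp only [mul_diagonal, star_apply, star_trivial]
    exact sum_congr rfl fun j _ => by ring
  calc |(W * diagonal s * star W) i i| ≤ ∑ j, |s j * W i j ^ 2| := by
        rw [hentry]; exact abs_sum_le_sum_abs _ _
    _ ≤ ∑ j, W i j ^ 2 := sum_le_sum fun j _ => by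
        rw [abs_mul, abs_sq]; exact mul_le_of_le_one_left (sq_nonneg _) (hs j)
    _ = 1 := sum_sq_row_of_mem_unitaryGroup hW i

lemma trace_diagonal_mul_le_sum_abs (μ : n → ℝ) {Y : Matrix n n ℝ} (hY : ∀ i, |Y i i| ≤ 1) :
    trace (diagonal μ * Y) ≤ ∑ i, |μ i| := by
  simp only [trace, diag, diagonal_mul]
  refine sum_le_sum fun i _ => ?_
  calc μ i * Y i i ≤ |μ i| * |Y i i| := abs_mul (μ i) (Y i i) ▸ le_abs_self _
    _ ≤ |μ i| := mul_le_of_le_one_right (abs_nonneg _) (hY i)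

lemma trace_conj_of_mem_unitaryGroup {W : Matrix n n ℝ} (hW : W ∈ unitaryGroup n ℝ)
    (Y : Matrix n n ℝ) : trace (W * Y * star W) = trace Y := by
  rw [trace_mul_cycle, mem_unitaryGroup_iff'.mp hW, Matrix.one_mul]

namespace IsHermitian

variable {M : Matrix n n ℝ} (hM : M.IsHermitian)

local notation "U" => (hM.eigenvectorUnitary : Matrix n n ℝ)

lemma eq_conj_diagonal_eigenvalues : M = U * diagonal hM.eigenvalues * star U := by
  simpa [RCLike.ofReal_real_eq_id] using hM.spectral_theorem

lemma sub_smul_one_eq_conj_diagonal (c : ℝ) :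
    M - c • 1 = U * diagonal (fun i => hM.eigenvalues i - c) * star U := by
  have hU : U * star U = 1 := mem_unitaryGroup_iff.mp hM.eigenvectorUnitary.2
  rw [← diagonal_sub, ← smul_one_eq_diagonal, mul_sub, sub_mul, Matrix.mul_smul, Matrix.mul_one,
    Matrix.smul_mul, hU, ← hM.eq_conj_diagonal_eigenvalues]

lemma trace_sub_smul_one_mul_le_energyOf (c : ℝ) {W : Matrix n n ℝ} (hW : W ∈ unitaryGroup n ℝ)
    {s : n → ℝ} (hs : ∀ j, |s j| ≤ 1) :
    trace ((M - c • 1) * (W * diagonal s * star W)) ≤ energyOf M hM c := by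
  have hW' : star U * W ∈ unitaryGroup n ℝ :=
    mul_mem (Unitary.star_mem hM.eigenvectorUnitary.2) hW
  rw [hM.sub_smul_one_eq_conj_diagonal c]
  calc trace (U * diagonal (fun i => hM.eigenvalues i - c) * star U * (W * diagonal s * star W))
      = trace (diagonal (fun i => hM.eigenvalues i - c) *
          (star U * W * diagonal s * star (star U * W))) := by
        simp only [star_mul, star_star, Matrix.mul_assoc]
        rw [trace_mul_comm U]
        simp only [Matrix.mul_assoc]
    _ ≤ energyOf M hM c :=
        trace_diagonal_mul_le_sum_abs _ (abs_conj_diagonal_apply_self_le_one hW' hs)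

lemma trace_mul_conj_sign_eq_energyOf :
    trace (M * (U * diagonal (fun i => (SignType.sign (hM.eigenvalues i) : ℝ)) * star U)) =
      energyOf M hM 0 := by
  have hU : star U * U = 1 := mem_unitaryGroup_iff'.mp hM.eigenvectorUnitary.2
  calc trace (M * (U * diagonal (fun i => (SignType.sign (hM.eigenvalues i) : ℝ)) * star U))
      = trace (U * diagonal hM.eigenvalues * star U *
          (U * diagonal (fun i => (SignType.sign (hM.eigenvalues i) : ℝ)) * star U)) := by
        rw [← hM.eq_conj_diagonal_eigenvalues]
    _ = trace (U * (diagonal hM.eigenvalues *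
          diagonal (fun i => (SignType.sign (hM.eigenvalues i) : ℝ))) * star U) := by
        simp only [Matrix.mul_assoc]
        rw [← Matrix.mul_assoc (star U), hU, Matrix.one_mul]
    _ = energyOf M hM 0 := by
        rw [trace_conj_of_mem_unitaryGroup hM.eigenvectorUnitary.2, diagonal_mul_diagonal,
          trace_diagonal]
        simp [energyOf]

end IsHermitian

theorem mul_energyOf_le_add {A M₁ M₂ : Matrix n n ℝ} (hA : A.IsHermitian) (hM₁ : M₁.IsHermitian)
    (hM₂ : M₂.IsHermitian) {k c₁ c₂ : ℝ} (h : M₁ - c₁ • 1 + (M₂ - c₂ • 1) = k • A) :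
    k * energyOf A hA 0 ≤ energyOf M₁ hM₁ c₁ + energyOf M₂ hM₂ c₂ := by
  have hs : ∀ i, |(SignType.sign (hA.eigenvalues i) : ℝ)| ≤ 1 := fun i => SignType.abs_coe_le_one _
  have hU := hA.eigenvectorUnitary.2
  calc k * energyOf A hA 0 = trace ((k • A) * _) := by
        rw [smul_mul, trace_smul, hA.trace_mul_conj_sign_eq_energyOf, smul_eq_mul]
    _ = _ := by rw [← h, Matrix.add_mul, trace_add]
    _ ≤ _ := add_le_add (hM₁.trace_sub_smul_one_mul_le_energyOf c₁ hU hs)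
        (hM₂.trace_sub_smul_one_mul_le_energyOf c₂ hU hs)

end Matrix

section SelfLoop

variable {V : Type} [Fintype V] [DecidableEq V]

lemma loopDiag_add_loopDiag_compl (S : Finset V) : loopDiag S + loopDiag Sᶜ = 1 := by
  rw [loopDiag, loopDiag, diagonal_add, ← diagonal_one]
  congr 1
  ext v
  by_cases hv : v ∈ S <;> simp [hv]

lemma card_div_smul_one_add_card_compl_div_smul_one (S : Finset V) :
    ((S.card : ℝ) / Fintype.card V) • (1 : Matrix V V ℝ) +
      ((Sᶜ.card : ℝ) / Fintype.card V) • 1 = 1 := by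
  rcases isEmpty_or_nonempty V with hV | hV
  · ext i
    exact isEmptyElim i
  · rw [← add_smul, ← add_div, ← Nat.cast_add, card_add_card_compl,
      div_self (Nat.cast_ne_zero.mpr Fintype.card_ne_zero), one_smul]

lemma selfLoop_shift_add_selfLoop_compl_shift (G : SimpleGraph V) [DecidableRel G.Adj]
    (S : Finset V) :
    SimpleGraph.adjMatrix ℝ G + loopDiag S - ((S.card : ℝ) / Fintype.card V) • 1 +
        (SimpleGraph.adjMatrix ℝ G + loopDiag Sᶜ - ((Sᶜ.card : ℝ) / Fintype.card V) • 1) =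
      (2 : ℝ) • SimpleGraph.adjMatrix ℝ G := by
  calc _ = SimpleGraph.adjMatrix ℝ G + SimpleGraph.adjMatrix ℝ G + (loopDiag S + loopDiag Sᶜ) -
        (((S.card : ℝ) / Fintype.card V) • 1 + ((Sᶜ.card : ℝ) / Fintype.card V) • 1) := by abel
    _ = _ := by
      rw [loopDiag_add_loopDiag_compl, card_div_smul_one_add_card_compl_div_smul_one,
        add_sub_cancel_right, two_smul]

theorem two_mul_graphEnergy_le_selfLoopEnergy_add_compl (G : SimpleGraph V)
    [DecidableRel G.Adj] (S : Finset V) :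
    2 * graphEnergy G ≤ selfLoopEnergy G S + selfLoopEnergy G Sᶜ :=
  mul_energyOf_le_add _ _ _ (selfLoop_shift_add_selfLoop_compl_shift G S)

end SelfLoop

theorem energy_complement_general {V : Type} [Fintype V] [DecidableEq V]
    (G : SimpleGraph V) [DecidableRel G.Adj] (S : Finset V) :
    (selfLoopEnergy G S < graphEnergy G → graphEnergy G < selfLoopEnergy G Sᶜ) ∧
    (selfLoopEnergy G S = graphEnergy G → graphEnergy G ≤ selfLoopEnergy G Sᶜ) := by
  have hsum := two_mul_graphEnergy_le_selfLoopEnergy_add_compl G S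
  exact ⟨fun h => by linarith, fun h => by linarith⟩

/-- If `E(G_S) < E(G)` then `E(G_{V∖S}) > E(G)`, and if `E(G_S) = E(G)` then
`E(G_{V∖S}) ≥ E(G)`. -/
theorem energy_complement {V : Type} [Fintype V] [DecidableEq V]
    (G : SimpleGraph V) [DecidableRel G.Adj] (S : Finset V)
    (hne : S.Nonempty) (hproper : S ≠ Finset.univ) :
    (selfLoopEnergy G S < graphEnergy G → graphEnergy G < selfLoopEnergy G Sᶜ) ∧
    (selfLoopEnergy G S = graphEnergy G → graphEnergy G ≤ selfLoopEnergy G Sᶜ) :=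
  energy_complement_general G S
end

section
/- For every simple graph G on n ≥ 2 vertices, there exists a subset S ⊆ V(G) such that E(G_S) > E(G). -/
set_option linter.unusedSectionVars false

open Matrix Finset

/-!
Let `W = sign A` be the sign matrix of the adjacency matrix `A`: it is symmetric, `W² ≤ 1`, it
commutes with `A`, and `tr (A W) = E(G)`. For every symmetric `N` and every such `W`,
`tr ((N - c) W) ≤ ∑ |λᵢ(N) - c|`, and equality forces `N W = W N`: in an eigenbasis of `N` the
diagonal entries of `W` lie in `[-1, 1]`, and an entry `±1` kills the rest of its column.
With `N = A + D_{v}` and `c = 1/n` this reads `E(G_{v}) ≥ E(G) + W v v - tr W / n`.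
If no loop set raised the energy, each `W v v` would be at most the average of the diagonal, hence
equal to it, so equality holds for every `v`. Then `W` commutes with every `D_{v}`, i.e. is
diagonal, and `E(G) = tr (A W) = 0` because `A` has zero diagonal. But then `E(G_{v}) = 0`, which
forces `A + D_{v} = I / n`: impossible when `n ≥ 2`.
-/

open Unitary

namespace Matrix

section Contraction

variable {V : Type*} [Fintype V] [DecidableEq V] {P : Matrix V V ℝ}

lemma sum_sq_le_one_of_posSemidef_one_sub_mul_self (hP : P.IsHermitian)
    (hPc : (1 - P * P).PosSemidef) (k : V) : ∑ j, P j k ^ 2 ≤ 1 := by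
  have hkk := hPc.diag_nonneg (i := k)
  rw [sub_apply, one_apply_eq, mul_apply] at hkk
  have hsymm : ∀ j, P k j = P j k := fun j => by simpa using congrFun₂ hP j k
  simpa only [hsymm, sq, sub_nonneg] using hkk

lemma abs_diag_le_one (hP : P.IsHermitian) (hPc : (1 - P * P).PosSemidef) (k : V) :
    |P k k| ≤ 1 := by
  have hkk : P k k ^ 2 ≤ ∑ j, P j k ^ 2 :=
    single_le_sum (f := fun j => P j k ^ 2) (fun j _ => sq_nonneg _) (mem_univ k)
  exact (sq_le_one_iff_abs_le_one _).mp
    (hkk.trans (sum_sq_le_one_of_posSemidef_one_sub_mul_self hP hPc k))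

lemma apply_eq_zero_of_abs_diag_eq_one (hP : P.IsHermitian) (hPc : (1 - P * P).PosSemidef)
    {j k : V} (hk : |P k k| = 1) (hjk : j ≠ k) : P j k = 0 := by
  have hpair : P j k ^ 2 + P k k ^ 2 ≤ ∑ i, P i k ^ 2 := by
    rw [← sum_pair (f := fun i => P i k ^ 2) hjk]
    exact sum_le_sum_of_subset_of_nonneg (subset_univ _) fun i _ _ => sq_nonneg _
  have hkk : P k k ^ 2 = 1 := by rw [← sq_abs, hk, one_pow]
  have := sum_sq_le_one_of_posSemidef_one_sub_mul_self hP hPc k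
  exact pow_eq_zero_iff two_ne_zero |>.mp (by nlinarith [sq_nonneg (P j k)])

lemma mul_diag_le_abs (hP : P.IsHermitian) (hPc : (1 - P * P).PosSemidef) (a : ℝ) (k : V) :
    a * P k k ≤ |a| :=
  calc a * P k k ≤ |a| * |P k k| := by rw [← abs_mul]; exact le_abs_self _
    _ ≤ |a| := mul_le_of_le_one_right (abs_nonneg a) (abs_diag_le_one hP hPc k)

lemma trace_diagonal_mul_le (hP : P.IsHermitian) (hPc : (1 - P * P).PosSemidef) (a : V → ℝ) :
    trace (diagonal a * P) ≤ ∑ j, |a j| := by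
  simp only [trace, diag_apply, diagonal_mul]
  exact sum_le_sum fun j _ => mul_diag_le_abs hP hPc (a j) j

lemma commute_diagonal_of_trace_mul_eq (hP : P.IsHermitian) (hPc : (1 - P * P).PosSemidef)
    (a : V → ℝ) (h : trace (diagonal a * P) = ∑ j, |a j|) : Commute (diagonal a) P := by
  simp only [trace, diag_apply, diagonal_mul] at h
  have hterm := (sum_eq_sum_iff_of_le fun j _ => mul_diag_le_abs hP hPc (a j) j).mp h
  -- equality forces `|P k k| = 1` wherever `a k ≠ 0`
  have hcol : ∀ {j k}, a k ≠ 0 → j ≠ k → P j k = 0 := fun {j k} hak hjk => by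
    refine apply_eq_zero_of_abs_diag_eq_one hP hPc ?_ hjk
    have : |a k| * |P k k| = |a k| * 1 := by
      rw [← abs_mul, hterm k (mem_univ k), abs_abs, mul_one]
    exact mul_left_cancel₀ (abs_ne_zero.mpr hak) this
  have hsymm : ∀ j k, P j k = P k j := fun j k => by simpa using congrFun₂ hP k j
  ext j k
  rw [diagonal_mul, mul_diagonal]
  by_cases hjk : j = k
  · rw [hjk, mul_comm]
  by_cases hak : a k = 0
  · by_cases haj : a j = 0
    · rw [hak, haj, zero_mul, mul_zero]
    · rw [hsymm, hcol haj (Ne.symm hjk), mul_zero, zero_mul]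
  · rw [hcol hak hjk, mul_zero, zero_mul]

end Contraction

section Conjugation

variable {V R : Type*} [Fintype V] [DecidableEq V] [CommRing R] [StarRing R]

lemma trace_conjStarAlgAut (u : unitaryGroup V R) (X : Matrix V V R) :
    trace (conjStarAlgAut R _ u X) = trace X := by
  rw [conjStarAlgAut_apply, trace_mul_cycle, Unitary.coe_star_mul_self, one_mul]

lemma isHermitian_conjStarAlgAut {X : Matrix V V R} (hX : X.IsHermitian) (u : unitaryGroup V R) :
    (conjStarAlgAut R _ u X).IsHermitian :=
  isHermitian_iff_isSelfAdjoint.mpr ((isHermitian_iff_isSelfAdjoint.mp hX).map _)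

lemma posSemidef_conjStarAlgAut [PartialOrder R] {X : Matrix V V R} (hX : X.PosSemidef)
    (u : unitaryGroup V R) : (conjStarAlgAut R _ u X).PosSemidef := by
  rw [conjStarAlgAut_apply, star_eq_conjTranspose]
  exact hX.mul_mul_conjTranspose_same _

end Conjugation

section TraceDuality

variable {V : Type} [Fintype V] [DecidableEq V] {N W : Matrix V V ℝ}

lemma IsHermitian.conjStarAlgAut_sub_smul_one (hN : N.IsHermitian) (c : ℝ) :
    conjStarAlgAut ℝ _ (star hN.eigenvectorUnitary) (N - c • 1) =
      diagonal fun i => hN.eigenvalues i - c := by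
  rw [map_sub, map_smul, map_one, hN.conjStarAlgAut_star_eigenvectorUnitary, smul_one_eq_diagonal,
    diagonal_sub]
  rfl

lemma IsHermitian.trace_sub_smul_one_mul_eq (hN : N.IsHermitian) (c : ℝ) :
    trace ((N - c • 1) * W) = trace ((diagonal fun i => hN.eigenvalues i - c) *
      conjStarAlgAut ℝ _ (star hN.eigenvectorUnitary) W) := by
  rw [← trace_conjStarAlgAut (star hN.eigenvectorUnitary), map_mul,
    hN.conjStarAlgAut_sub_smul_one]

lemma posSemidef_one_sub_conjStarAlgAut_mul_self (hWc : (1 - W * W).PosSemidef)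
    (u : unitaryGroup V ℝ) :
    (1 - conjStarAlgAut ℝ _ u W * conjStarAlgAut ℝ _ u W).PosSemidef := by
  rw [← map_mul, ← map_one (conjStarAlgAut ℝ _ u), ← map_sub]
  exact posSemidef_conjStarAlgAut hWc u

theorem IsHermitian.trace_sub_smul_one_mul_le_energyOf_s7 (hN : N.IsHermitian) (hW : W.IsHermitian)
    (hWc : (1 - W * W).PosSemidef) (c : ℝ) :
    trace ((N - c • 1) * W) ≤ energyOf N hN c := by
  rw [hN.trace_sub_smul_one_mul_eq]
  exact trace_diagonal_mul_le (isHermitian_conjStarAlgAut hW _)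
    (posSemidef_one_sub_conjStarAlgAut_mul_self hWc _) _

theorem IsHermitian.commute_of_trace_sub_smul_one_mul_eq_energyOf (hN : N.IsHermitian)
    (hW : W.IsHermitian) (hWc : (1 - W * W).PosSemidef) (c : ℝ)
    (h : trace ((N - c • 1) * W) = energyOf N hN c) : Commute N W := by
  rw [hN.trace_sub_smul_one_mul_eq] at h
  have hcomm := commute_diagonal_of_trace_mul_eq (isHermitian_conjStarAlgAut hW _)
    (posSemidef_one_sub_conjStarAlgAut_mul_self hWc _) _ h
  rw [← hN.conjStarAlgAut_sub_smul_one] at hcomm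
  have := hcomm.map (conjStarAlgAut ℝ _ (star hN.eigenvectorUnitary)).symm
  simp only [StarAlgEquiv.symm_apply_apply] at this
  simpa using this.add_left ((Commute.one_left W).smul_left c)

end TraceDuality

namespace IsHermitian

variable {V : Type} [Fintype V] [DecidableEq V] {M : Matrix V V ℝ}

noncomputable def signMatrix (hM : M.IsHermitian) : Matrix V V ℝ :=
  conjStarAlgAut ℝ _ hM.eigenvectorUnitary (diagonal fun i => (SignType.sign (hM.eigenvalues i) : ℝ))

lemma eq_conjStarAlgAut_diagonal (hM : M.IsHermitian) :
    M = conjStarAlgAut ℝ _ hM.eigenvectorUnitary (diagonal hM.eigenvalues) := by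
  conv_lhs => rw [hM.spectral_theorem]
  rfl

lemma isHermitian_signMatrix (hM : M.IsHermitian) : hM.signMatrix.IsHermitian :=
  isHermitian_conjStarAlgAut (isHermitian_diagonal _) _

lemma posSemidef_one_sub_signMatrix_mul_self (hM : M.IsHermitian) :
    (1 - hM.signMatrix * hM.signMatrix).PosSemidef := by
  rw [signMatrix, ← map_mul, ← map_one (conjStarAlgAut ℝ _ hM.eigenvectorUnitary), ← map_sub,
    diagonal_mul_diagonal, ← diagonal_one, diagonal_sub]
  refine posSemidef_conjStarAlgAut (PosSemidef.diagonal fun i => ?_) _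
  rcases lt_trichotomy (hM.eigenvalues i) 0 with h | h | h <;> simp [h]

lemma commute_signMatrix (hM : M.IsHermitian) : Commute M hM.signMatrix := by
  have h := (commute_diagonal hM.eigenvalues fun i => (SignType.sign (hM.eigenvalues i) : ℝ)).map
    (conjStarAlgAut ℝ _ hM.eigenvectorUnitary)
  rwa [← hM.eq_conjStarAlgAut_diagonal] at h

lemma trace_mul_signMatrix (hM : M.IsHermitian) : trace (M * hM.signMatrix) = energyOf M hM 0 := by
  have h := trace_conjStarAlgAut hM.eigenvectorUnitary
    (diagonal hM.eigenvalues * diagonal fun i => (SignType.sign (hM.eigenvalues i) : ℝ))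
  rw [map_mul, ← hM.eq_conjStarAlgAut_diagonal, diagonal_mul_diagonal, trace_diagonal] at h
  rw [signMatrix, h, energyOf]
  simp

end IsHermitian
end Matrix

section Energy

variable {V : Type} [Fintype V] [DecidableEq V] {M : Matrix V V ℝ}

lemma energyOf_nonneg (hM : M.IsHermitian) (c : ℝ) : 0 ≤ energyOf M hM c :=
  sum_nonneg fun _ _ => abs_nonneg _

lemma eq_smul_one_of_energyOf_eq_zero (hM : M.IsHermitian) {c : ℝ} (h : energyOf M hM c = 0) :
    M = c • 1 := by
  have hc : hM.eigenvalues = fun _ => c := funext fun i => by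
    have := (sum_eq_zero_iff_of_nonneg fun i _ => abs_nonneg _).mp h i (mem_univ i)
    exact sub_eq_zero.mp (abs_eq_zero.mp this)
  rw [hM.eq_conjStarAlgAut_diagonal, hc, ← smul_one_eq_diagonal, map_smul, map_one]

end Energy

lemma Finset.eq_average_of_forall_le_average {ι : Type*} [Fintype ι] {f : ι → ℝ}
    (h : ∀ i, f i ≤ (∑ j, f j) / Fintype.card ι) (i : ι) :
    f i = (∑ j, f j) / Fintype.card ι := by
  have hcard : (Fintype.card ι : ℝ) ≠ 0 := Nat.cast_ne_zero.mpr (Fintype.card_pos_iff.mpr ⟨i⟩).ne'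
  refine (sum_eq_sum_iff_of_le fun j _ => h j).mp ?_ i (mem_univ i)
  rw [sum_const, card_univ, nsmul_eq_mul, mul_div_cancel₀ _ hcard]

section SelfLoops

variable {V : Type} [Fintype V] [DecidableEq V]

lemma trace_loopDiag_mul (S : Finset V) (W : Matrix V V ℝ) :
    trace (loopDiag S * W) = ∑ v ∈ S, W v v := by
  simp [trace, loopDiag, diagonal_mul, sum_ite_mem]

lemma apply_eq_zero_of_commute_loopDiag_singleton {W : Matrix V V ℝ} {u v : V}
    (h : Commute (loopDiag {u}) W) (huv : u ≠ v) : W u v = 0 := by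
  simpa [loopDiag, diagonal_mul, mul_diagonal, Ne.symm huv] using congrFun₂ h.eq u v

variable (G : SimpleGraph V) [DecidableRel G.Adj]

lemma SimpleGraph.trace_adjMatrix_mul_eq_zero {W : Matrix V V ℝ}
    (hW : ∀ u v, u ≠ v → W u v = 0) : trace (G.adjMatrix ℝ * W) = 0 := by
  refine sum_eq_zero fun v _ => sum_eq_zero fun u _ => ?_
  by_cases huv : u = v
  · simp [huv]
  · simp [hW u v huv]

lemma selfLoopEnergy_singleton_pos (hn : 2 ≤ Fintype.card V) (v : V) :
    0 < selfLoopEnergy G {v} := by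
  refine (energyOf_nonneg _ _).lt_of_ne fun h => ?_
  obtain ⟨u, hu⟩ := Fintype.exists_ne_of_one_lt_card (by omega) v
  have hpos : (0 : ℝ) < Fintype.card V := by positivity
  have := congrFun₂ (eq_smul_one_of_energyOf_eq_zero _ h.symm) u u
  simp [loopDiag, hu] at this
  linarith

lemma trace_selfLoop_sub_smul_one_mul_signMatrix (S : Finset V) (c : ℝ) :
    trace ((G.adjMatrix ℝ + loopDiag S - c • 1) * (adjMatrix_isHermitian G).signMatrix) =
      graphEnergy G + (∑ v ∈ S, (adjMatrix_isHermitian G).signMatrix v v -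
        c * trace (adjMatrix_isHermitian G).signMatrix) := by
  rw [sub_mul, add_mul, trace_sub, trace_add, trace_loopDiag_mul, IsHermitian.trace_mul_signMatrix,
    smul_mul, one_mul, trace_smul, smul_eq_mul, graphEnergy]
  ring

lemma le_selfLoopEnergy (S : Finset V) :
    graphEnergy G + (∑ v ∈ S, (adjMatrix_isHermitian G).signMatrix v v -
      S.card / Fintype.card V * trace (adjMatrix_isHermitian G).signMatrix) ≤
      selfLoopEnergy G S := by
  rw [← trace_selfLoop_sub_smul_one_mul_signMatrix]
  exact (selfLoop_isHermitian G S).trace_sub_smul_one_mul_le_energyOf_s7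
    (IsHermitian.isHermitian_signMatrix _) (IsHermitian.posSemidef_one_sub_signMatrix_mul_self _) _

lemma commute_loopDiag_of_selfLoopEnergy_le (S : Finset V)
    (h : selfLoopEnergy G S ≤ graphEnergy G + (∑ v ∈ S, (adjMatrix_isHermitian G).signMatrix v v -
      S.card / Fintype.card V * trace (adjMatrix_isHermitian G).signMatrix)) :
    Commute (loopDiag S) (adjMatrix_isHermitian G).signMatrix := by
  have heq := le_antisymm (le_selfLoopEnergy G S) h
  rw [← trace_selfLoop_sub_smul_one_mul_signMatrix] at heq
  have hcomm := (selfLoop_isHermitian G S).commute_of_trace_sub_smul_one_mul_eq_energyOf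
    (IsHermitian.isHermitian_signMatrix _) (IsHermitian.posSemidef_one_sub_signMatrix_mul_self _) _
    heq
  simpa using hcomm.sub_left (IsHermitian.commute_signMatrix _)

end SelfLoops

/-- Akbari et al.'s conjecture: every simple graph on at least two vertices has
a loop set `S` with `E(G_S) > E(G)`. -/
theorem exists_selfLoopEnergy_gt {V : Type} [Fintype V] [DecidableEq V]
    (G : SimpleGraph V) [DecidableRel G.Adj] (hn : 2 ≤ Fintype.card V) :
    ∃ S : Finset V, graphEnergy G < selfLoopEnergy G S := by
  by_contra! hle
  set W := (adjMatrix_isHermitian G).signMatrix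
  have hbound : ∀ v, graphEnergy G + (W v v - trace W / Fintype.card V) ≤ selfLoopEnergy G {v} :=
    fun v => by simpa [div_eq_inv_mul] using le_selfLoopEnergy G {v}
  have hdiag : ∀ v, W v v = trace W / Fintype.card V :=
    eq_average_of_forall_le_average (f := fun v => W v v) fun v =>
      show W v v ≤ trace W / _ by linarith [hbound v, hle {v}]
  have hcomm : ∀ v, Commute (loopDiag {v}) W := fun v =>
    commute_loopDiag_of_selfLoopEnergy_le G {v} (by
      show _ ≤ graphEnergy G + (∑ u ∈ {v}, W u u - _ * trace W)
      simpa [hdiag v, div_eq_inv_mul] using hle {v})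
  have hE : graphEnergy G = 0 := by
    rw [graphEnergy, ← IsHermitian.trace_mul_signMatrix]
    exact G.trace_adjMatrix_mul_eq_zero fun u v huv =>
      apply_eq_zero_of_commute_loopDiag_singleton (hcomm u) huv
  obtain ⟨v⟩ : Nonempty V := Fintype.card_pos_iff.mp (by omega)
  exact (selfLoopEnergy_singleton_pos G hn v).not_ge (hE ▸ hle {v})
end
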